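/- arXiv:2202.12287 — 6 statements merged into one kernel-verified Lean document; each statement's English description precedes it below -/
import Mathlib

section
/- Let U : A ⥤ B be an additive, exact, faithful functor between abelian categories with left adjoint F (a resolvent pair). An object P of A is relatively projective (i.e., every lifting problem against an allowable epimorphism can be solved) if and only if P is a direct summand (retract) of F(X) for some object X of B. -/
open CategoryTheory CategoryTheory.Limits

universe v u v' u'

/-- A resolvent pair of abelian categories: an adjunction `F ⊣ U` where the right adjoint
`U : A ⥤ B` is additive, exact and faithful. -/
structure ResolventPair (A : Type u) [Category.{v} A] [Abelian A]
    (B : Type u') [Category.{v'} B] [Abelian B] where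
  /-- the left adjoint (e.g. induction) -/
  F : B ⥤ A
  /-- the right adjoint (e.g. restriction), assumed additive, exact and faithful -/
  U : A ⥤ B
  adj : F ⊣ U
  additive : U.Additive
  preservesFiniteLimits : PreservesFiniteLimits U
  preservesFiniteColimits : PreservesFiniteColimits U
  faithful : U.Faithful

namespace ResolventPair

variable {A : Type u} [Category.{v} A] [Abelian A]
  {B : Type u'} [Category.{v'} B] [Abelian B]

/-- A morphism `f` of `A` is allowable if `U f` admits a quasi-inverse `s`,
i.e. `U f ∘ s ∘ U f = U f`. -/
def Allowable (R : ResolventPair A B) {V W : A} (f : V ⟶ W) : Prop :=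
  ∃ s : R.U.obj W ⟶ R.U.obj V, R.U.map f ≫ s ≫ R.U.map f = R.U.map f

/-- An object `P` of `A` is relatively projective if every lifting problem against an
allowable epimorphism can be solved. -/
def RelProjective (R : ResolventPair A B) (P : A) : Prop :=
  ∀ ⦃V W : A⦄ (f : V ⟶ W), Epi f → R.Allowable f →
    ∀ g : P ⟶ W, ∃ h : P ⟶ V, h ≫ f = g

end ResolventPair

/-- An object `P` of the top category of a resolvent pair is relatively projective if and only
if it is a direct summand (retract) of `F X` for some object `X` of the bottom category. -/
theorem relProjective_iff_retract_of_free
    {A : Type u} [Category.{v} A] [Abelian A] {B : Type u'} [Category.{v'} B] [Abelian B]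
    (R : ResolventPair A B) (P : A) :
    R.RelProjective P ↔
      ∃ (X : B) (i : P ⟶ R.F.obj X) (r : R.F.obj X ⟶ P), i ≫ r = 𝟙 P := by
  have hFL := R.preservesFiniteLimits
  have hFC := R.preservesFiniteColimits
  have hFaith := R.faithful
  constructor
  · intro hP
    -- use the counit ε : F (U P) ⟶ P
    set ε : R.F.obj (R.U.obj P) ⟶ P := R.adj.counit.app P with hε
    have hsplit : R.adj.unit.app (R.U.obj P) ≫ R.U.map ε = 𝟙 (R.U.obj P) :=
      R.adj.right_triangle_components P
    haveI : IsSplitEpi (R.U.map ε) := IsSplitEpi.mk' ⟨_, hsplit⟩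
    have hepiU : Epi (R.U.map ε) := inferInstance
    have hepi : Epi ε := R.U.epi_of_epi_map hepiU
    have hallow : R.Allowable ε := by
      refine ⟨R.adj.unit.app (R.U.obj P), ?_⟩
      rw [hsplit, Category.comp_id]
    obtain ⟨h, hh⟩ := hP ε hepi hallow (𝟙 P)
    exact ⟨R.U.obj P, h, ε, hh⟩
  · rintro ⟨X, i, r, hir⟩
    intro V W f hepi hallow g
    obtain ⟨s, hs⟩ := hallow
    have hepiU : Epi (R.U.map f) := R.U.map_epi f
    have hsec : s ≫ R.U.map f = 𝟙 (R.U.obj W) := by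
      rw [← cancel_epi (R.U.map f), hs, Category.comp_id]
    -- lift for F X
    set g' : X ⟶ R.U.obj W := R.adj.homEquiv X W (r ≫ g) with hg'
    refine ⟨i ≫ (R.adj.homEquiv X V).symm (g' ≫ s), ?_⟩
    rw [Category.assoc, ← R.adj.homEquiv_naturality_right_symm,
      Category.assoc, hsec, Category.comp_id, hg', Equiv.symm_apply_apply,
      ← Category.assoc, hir, Category.id_comp]
end

section
/- Let A = k-mod for a k-algebra A (finite-dimensional modules) be the top category of a resolvent pair. If π : P → V is an allowable epimorphism from a relatively projective object P, then π is minimal (for all f ∈ End(P), π ∘ f = π implies f is an isomorphism) if and only if π is relatively essential (for every submodule S ⊆ M, if the restriction π|_S is an allowable epimorphism then S = M). -/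
/-! If `π` is minimal and `π|_S` is an allowable epimorphism, relative projectivity of `P` lifts `π`
along `π|_S`; the lift followed by the inclusion of `S` is an endomorphism over `π`, hence
invertible, so `S = P`. Conversely, any `f` with `π ∘ f = π` makes `π` restricted to the image
of `f` an allowable epimorphism, so relative essentiality forces `f` to be onto, and a surjective
endomorphism of a finite-dimensional module is bijective. -/

open CategoryTheory CategoryTheory.Limits

universe v u v' u'

open ModuleCat

variable {k : Type u} [Field k] {Aa : Type u} [Ring Aa] [Algebra k Aa]
  {B : Type u'} [Category.{v'} B] [Abelian B]

/-- The inclusion of a submodule, as a morphism in `ModuleCat`. -/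
def inclusionHom (P : ModuleCat.{u} Aa) (S : Submodule Aa P) :
    ModuleCat.of Aa S ⟶ P :=
  ModuleCat.ofHom S.subtype

namespace ResolventPair

variable {A : Type u} [Category.{v} A] [Abelian A] {R : ResolventPair A B}

/-- The quasi-inverse of `U (a ≫ h)` is `s ≫ U e`, for `s` a quasi-inverse of `U h`. -/
theorem Allowable.comp_of_fac {X Y Z : A} {h : X ⟶ Y} (hh : R.Allowable h) (a : Z ⟶ X)
    (e : X ⟶ Z) (w : e ≫ a ≫ h = h) : R.Allowable (a ≫ h) := by
  obtain ⟨s, hs⟩ := hh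
  refine ⟨s ≫ R.U.map e, ?_⟩
  simp only [Functor.map_comp, Category.assoc]
  rw [← Functor.map_comp, ← Functor.map_comp, w, hs, Functor.map_comp]

theorem epi_of_minimal {P V S : A} {π : P ⟶ V} (hproj : R.RelProjective P)
    (hmin : ∀ f : P ⟶ P, f ≫ π = π → IsIso f) (ι : S ⟶ P) [Epi (ι ≫ π)]
    (hι : R.Allowable (ι ≫ π)) : Epi ι := by
  obtain ⟨h, hh⟩ := hproj _ inferInstance hι π
  have : IsIso (h ≫ ι) := hmin _ (by rw [Category.assoc, hh])
  exact epi_of_epi h ι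

end ResolventPair

namespace ModuleCat

theorem eq_top_of_epi_inclusionHom {P : ModuleCat.{u} Aa} {S : Submodule Aa P}
    (h : Epi (inclusionHom P S)) : S = ⊤ := by
  rwa [epi_iff_range_eq_top, inclusionHom, hom_ofHom, Submodule.range_subtype] at h

theorem rangeRestrict_comp_inclusionHom {P Q : ModuleCat.{u} Aa} (f : P ⟶ Q) :
    ofHom f.hom.rangeRestrict ≫ inclusionHom Q (LinearMap.range f.hom) = f :=
  rfl

theorem isIso_of_surjective_of_finiteDimensional {P : ModuleCat.{u} Aa} [FiniteDimensional k P]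
    (f : P ⟶ P) (hf : Function.Surjective f) : IsIso f :=
  (ConcreteCategory.isIso_iff_bijective f).mpr
    ⟨(LinearMap.injective_iff_surjective (K := k) (f := f.hom.restrictScalars k)).mpr hf, hf⟩

end ModuleCat

/-- Let the top category of a resolvent pair be the category of modules over a `k`-algebra,
and let `π : P → V` be an allowable epimorphism from a relatively projective finite-dimensional
module `P`.  Then `π` is minimal (every endomorphism `f` of `P` with `π ∘ f = π` is an
isomorphism) if and only if it is relatively essential (every submodule `S ⊆ P` on which `π`
restricts to an allowable epimorphism equals `P`). -/
theorem minimal_iff_relEssential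
    (R : ResolventPair (ModuleCat.{u} Aa) B)
    (P V : ModuleCat.{u} Aa) (hfin : FiniteDimensional k P)
    (π : P ⟶ V) (hepi : Epi π) (hallow : R.Allowable π)
    (hproj : R.RelProjective P) :
    (∀ f : P ⟶ P, f ≫ π = π → IsIso f) ↔
      (∀ S : Submodule Aa P, Epi (inclusionHom P S ≫ π) →
        R.Allowable (inclusionHom P S ≫ π) → S = ⊤) := by
  refine ⟨fun hmin S _ hSallow ↦ ?_, fun hess f hf ↦ ?_⟩
  · exact ModuleCat.eq_top_of_epi_inclusionHom (ResolventPair.epi_of_minimal hproj hmin _ hSallow)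
  · have hfac : ModuleCat.ofHom f.hom.rangeRestrict ≫ inclusionHom P _ ≫ π = π := by
      rw [← Category.assoc, ModuleCat.rangeRestrict_comp_inclusionHom, hf]
    have hrange := hess _ (epi_of_epi_fac hfac) (hallow.comp_of_fac _ _ hfac)
    exact ModuleCat.isIso_of_surjective_of_finiteDimensional (k := k) f
      (LinearMap.range_eq_top.mp hrange)
end

section
/- Let the top category of a resolvent pair be finite-dimensional modules over a k-algebra A, with k algebraically closed. Every object V admits a relatively projective cover (R_V, p_V) — a relatively projective object with a relatively essential allowable epimorphism p_V : R_V → V — and it is unique up to isomorphism. -/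
open CategoryTheory CategoryTheory.Limits

universe v u v' u'

open ModuleCat

variable {k : Type u} [Field k] {Aa : Type u} [Ring Aa] [Algebra k Aa]
  {B : Type u'} [Category.{v'} B] [Abelian B]

/-- An allowable epimorphism `π : M → V` is relatively essential if every submodule `S ⊆ M`
on which `π` restricts to an allowable epimorphism equals `M`. -/
def RelEssential (R : ResolventPair (ModuleCat.{u} Aa) B)
    {M V : ModuleCat.{u} Aa} (π : M ⟶ V) : Prop :=
  ∀ S : Submodule Aa M, Epi (inclusionHom M S ≫ π) →
    R.Allowable (inclusionHom M S ≫ π) → S = ⊤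

/-- A relatively projective cover of `V` is a relatively projective object together with a
relatively essential allowable epimorphism onto `V`. -/
def IsRelProjCover (R : ResolventPair (ModuleCat.{u} Aa) B)
    {Rv V : ModuleCat.{u} Aa} (p : Rv ⟶ V) : Prop :=
  R.RelProjective Rv ∧ Epi p ∧ R.Allowable p ∧ RelEssential R p

/-!
The counit `ε_V : F U V → V` is an allowable epimorphism out of a relatively projective module of
finite length. A submodule `S` of `F U V`, minimal among those on which `ε_V` restricts to an
allowable epimorphism, makes the restriction relatively essential, and `S` is a retract of
`F U V`. Two covers lift against each other by maps that essentiality forces to be surjective,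
and a surjective endomorphism of a noetherian module is invertible.
-/

namespace ResolventPair

variable {A : Type u} [Category.{v} A] [Abelian A]
  {B : Type u'} [Category.{v'} B] [Abelian B] (R : ResolventPair A B)

def IsAllowableEpi {V W : A} (f : V ⟶ W) : Prop :=
  Epi f ∧ R.Allowable f

variable {R}

lemma allowable_of_comp_eq_id {V W : A} {f : V ⟶ W} (s : R.U.obj W ⟶ R.U.obj V)
    (hs : s ≫ R.U.map f = 𝟙 _) : R.Allowable f :=
  ⟨s, by rw [hs, Category.comp_id]⟩

/-- Since `U` preserves epimorphisms, the relation `U f ≫ s ≫ U f = U f` cancels to a section. -/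
lemma IsAllowableEpi.exists_section {V W : A} {f : V ⟶ W} (hf : R.IsAllowableEpi f) :
    ∃ s : R.U.obj W ⟶ R.U.obj V, s ≫ R.U.map f = 𝟙 _ := by
  obtain ⟨hepi, s, hs⟩ := hf
  have := R.preservesFiniteColimits
  refine ⟨s, (cancel_epi (R.U.map f)).1 ?_⟩
  rwa [Category.comp_id]

lemma IsAllowableEpi.of_comp {M N V : A} {a : M ⟶ N} {q : N ⟶ V}
    (h : R.IsAllowableEpi (a ≫ q)) : R.IsAllowableEpi q := by
  have := h.1
  obtain ⟨s, hs⟩ := h.exists_section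
  refine ⟨epi_of_epi a q, allowable_of_comp_eq_id (s ≫ R.U.map a) ?_⟩
  rwa [Category.assoc, ← Functor.map_comp]

lemma RelProjective.exists_lift {P V W : A} (hP : R.RelProjective P) {f : V ⟶ W}
    (hf : R.IsAllowableEpi f) (g : P ⟶ W) : ∃ h : P ⟶ V, h ≫ f = g :=
  hP f hf.1 hf.2 g

lemma RelProjective.of_retract {P Q : A} (e : Retract P Q) (hQ : R.RelProjective Q) :
    R.RelProjective P := by
  intro V W f hf hA g
  obtain ⟨h, hh⟩ := hQ f hf hA (e.r ≫ g)
  exact ⟨e.i ≫ h, by rw [Category.assoc, hh, e.retract_assoc]⟩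

variable (R)

lemma relProjective_F_obj (X : B) : R.RelProjective (R.F.obj X) := by
  intro V W f hf hA g
  obtain ⟨s, hs⟩ := IsAllowableEpi.exists_section ⟨hf, hA⟩
  refine ⟨(R.adj.homEquiv X V).symm (R.adj.homEquiv X W g ≫ s), ?_⟩
  apply (R.adj.homEquiv X W).injective
  rw [Adjunction.homEquiv_naturality_right, Equiv.apply_symm_apply, Category.assoc, hs,
    Category.comp_id]

/-- By the triangle identity `η_{U V}` is a section of `U ε_V`; a faithful functor reflects
epimorphisms. -/
lemma isAllowableEpi_counit (V : A) : R.IsAllowableEpi (R.adj.counit.app V) := by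
  have hsplit := R.adj.right_triangle_components V
  have := R.faithful
  have : IsSplitEpi (R.U.map (R.adj.counit.app V)) := IsSplitEpi.mk' ⟨_, hsplit⟩
  exact ⟨R.U.epi_of_epi_map inferInstance, allowable_of_comp_eq_id _ hsplit⟩

end ResolventPair

namespace ModuleCat

lemma isIso_of_surjective_endo {M : ModuleCat.{u} Aa} [IsNoetherian Aa M] (e : M ⟶ M)
    (he : Function.Surjective e) : IsIso e :=
  have : Mono e := (mono_iff_injective e).2
    (IsNoetherian.injective_of_surjective_endomorphism e.hom he)
  have : Epi e := (epi_iff_surjective e).2 he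
  isIso_of_mono_of_epi e

end ModuleCat

open ResolventPair

variable {R : ResolventPair (ModuleCat.{u} Aa) B}

lemma isAllowableEpi_inclusionHom_range {N M V : ModuleCat.{u} Aa} {t : N ⟶ M} {p : M ⟶ V}
    (h : R.IsAllowableEpi (t ≫ p)) :
    R.IsAllowableEpi (inclusionHom M (LinearMap.range t.hom) ≫ p) := by
  have hfac : ofHom t.hom.rangeRestrict ≫ inclusionHom M (LinearMap.range t.hom) ≫ p = t ≫ p :=
    rfl
  rw [← hfac] at h
  exact h.of_comp

lemma RelEssential.surjective {N M V : ModuleCat.{u} Aa} {p : M ⟶ V} (hp : RelEssential R p)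
    (t : N ⟶ M) (h : R.IsAllowableEpi (t ≫ p)) : Function.Surjective t := by
  obtain ⟨hepi, hA⟩ := isAllowableEpi_inclusionHom_range h
  exact LinearMap.range_eq_top.1 (hp _ hepi hA)

lemma exists_relEssential_restriction {M V : ModuleCat.{u} Aa} [IsArtinian Aa M] {ε : M ⟶ V}
    (hε : R.IsAllowableEpi ε) :
    ∃ S : Submodule Aa M, R.IsAllowableEpi (inclusionHom M S ≫ ε) ∧
      RelEssential R (inclusionHom M S ≫ ε) := by
  let 𝒮 : Set (Submodule Aa M) := {S | R.IsAllowableEpi (inclusionHom M S ≫ ε)}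
  have htop : ⊤ ∈ 𝒮 := by
    have := isAllowableEpi_inclusionHom_range (t := 𝟙 M) (by rwa [Category.id_comp])
    rwa [ModuleCat.hom_id, LinearMap.range_id] at this
  obtain ⟨S, hS, hmin⟩ := wellFounded_lt.has_min 𝒮 ⟨⊤, htop⟩
  refine ⟨S, hS, fun T hTepi hTA => ?_⟩
  have hT : R.IsAllowableEpi ((inclusionHom (of Aa S) T ≫ inclusionHom M S) ≫ ε) :=
    ⟨by rwa [Category.assoc], by rwa [Category.assoc]⟩
  have hrange : LinearMap.range (inclusionHom (of Aa S) T ≫ inclusionHom M S).hom =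
      T.map S.subtype := by
    simp [inclusionHom, LinearMap.range_comp]
  have hTS : T.map S.subtype = S :=
    (Submodule.map_subtype_le S T).eq_of_not_lt
      (hmin _ (hrange ▸ isAllowableEpi_inclusionHom_range hT))
  exact Submodule.map_injective_of_injective S.injective_subtype
    (hTS.trans (Submodule.map_subtype_top S).symm)

/-- A lift `f` of `ε` along `p = i ≫ ε` makes `i ≫ f` an endomorphism of `S` over `p`, which is
surjective by essentiality and hence invertible: `S` is then a retract of `M`. -/
lemma relProjective_of_relEssential_comp {S M V : ModuleCat.{u} Aa} [IsNoetherian Aa S]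
    (hM : R.RelProjective M) (i : S ⟶ M) {ε : M ⟶ V} (hp : R.IsAllowableEpi (i ≫ ε))
    (hess : RelEssential R (i ≫ ε)) : R.RelProjective S := by
  obtain ⟨f, hf⟩ := hM.exists_lift hp ε
  have hsurj : Function.Surjective (i ≫ f) :=
    hess.surjective _ (by rwa [Category.assoc, hf])
  have := isIso_of_surjective_endo _ hsurj
  exact hM.of_retract ⟨i, f ≫ inv (i ≫ f), by rw [← Category.assoc, IsIso.hom_inv_id]⟩

lemma exists_isRelProjCover {M V : ModuleCat.{u} Aa} [IsArtinian Aa M] [IsNoetherian Aa M]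
    (hM : R.RelProjective M) {ε : M ⟶ V} (hε : R.IsAllowableEpi ε) :
    ∃ (Rv : ModuleCat.{u} Aa) (p : Rv ⟶ V), IsRelProjCover R p := by
  obtain ⟨S, ⟨hepi, hA⟩, hess⟩ := exists_relEssential_restriction hε
  exact ⟨of Aa S, _, relProjective_of_relEssential_comp hM _ ⟨hepi, hA⟩ hess, hepi, hA, hess⟩

lemma IsRelProjCover.exists_iso {Rv Rv' V : ModuleCat.{u} Aa} [IsNoetherian Aa Rv]
    {p : Rv ⟶ V} {p' : Rv' ⟶ V} (hp : IsRelProjCover R p) (hp' : IsRelProjCover R p') :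
    ∃ e : Rv ≅ Rv', e.hom ≫ p' = p := by
  obtain ⟨hproj, hepi, hA, hess⟩ := hp
  obtain ⟨hproj', hepi', hA', hess'⟩ := hp'
  obtain ⟨h, hh⟩ := hproj.exists_lift ⟨hepi', hA'⟩ p
  obtain ⟨h', hh'⟩ := hproj'.exists_lift ⟨hepi, hA⟩ p'
  have hsurj : Function.Surjective h := hess'.surjective h (hh ▸ ⟨hepi, hA⟩)
  have hsurj' : Function.Surjective h' := hess.surjective h' (hh' ▸ ⟨hepi', hA'⟩)
  have : IsIso (h ≫ h') := isIso_of_surjective_endo _ (hsurj'.comp hsurj)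
  have : Mono h := mono_of_mono h h'
  have : Epi h := (epi_iff_surjective h).2 hsurj
  have : IsIso h := isIso_of_mono_of_epi h
  exact ⟨asIso h, hh⟩

theorem relProjCover_exists_unique_general
    (R : ResolventPair (ModuleCat.{u} Aa) B)
    (hFU : ∀ M : ModuleCat.{u} Aa,
      FiniteDimensional k M → FiniteDimensional k (R.F.obj (R.U.obj M)))
    (V : ModuleCat.{u} Aa) (hV : FiniteDimensional k V) :
    (∃ (Rv : ModuleCat.{u} Aa) (p : Rv ⟶ V), IsRelProjCover R p) ∧
      ∀ (Rv Rv' : ModuleCat.{u} Aa) (p : Rv ⟶ V) (p' : Rv' ⟶ V),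
        FiniteDimensional k Rv → FiniteDimensional k Rv' →
        IsRelProjCover R p → IsRelProjCover R p' →
        ∃ e : Rv ≅ Rv', e.hom ≫ p' = p := by
  have : FiniteDimensional k (R.F.obj (R.U.obj V)) := hFU V hV
  have : IsArtinian Aa (R.F.obj (R.U.obj V)) := isArtinian_of_tower k inferInstance
  have : IsNoetherian Aa (R.F.obj (R.U.obj V)) := isNoetherian_of_tower k inferInstance
  refine ⟨exists_isRelProjCover (R.relProjective_F_obj _) (R.isAllowableEpi_counit V), ?_⟩
  intro Rv Rv' p p' _ _ hp hp'
  have : IsNoetherian Aa Rv := isNoetherian_of_tower k inferInstance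
  exact hp.exists_iso hp'

/-- Let the top category of a resolvent pair be the category of (finite-dimensional) modules
over a `k`-algebra, `k` algebraically closed.  Every (finite-dimensional) module `V` admits a
relatively projective cover `(R_V, p_V)`, and it is unique up to isomorphism. -/
theorem relProjCover_exists_unique [IsAlgClosed k]
    (R : ResolventPair (ModuleCat.{u} Aa) B)
    (hFU : ∀ M : ModuleCat.{u} Aa,
      FiniteDimensional k M → FiniteDimensional k (R.F.obj (R.U.obj M)))
    (V : ModuleCat.{u} Aa) (hV : FiniteDimensional k V) :
    (∃ (Rv : ModuleCat.{u} Aa) (p : Rv ⟶ V), IsRelProjCover R p) ∧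
      ∀ (Rv Rv' : ModuleCat.{u} Aa) (p : Rv ⟶ V) (p' : Rv' ⟶ V),
        FiniteDimensional k Rv → FiniteDimensional k Rv' →
        IsRelProjCover R p → IsRelProjCover R p' →
        ∃ e : Rv ≅ Rv', e.hom ≫ p' = p :=
  relProjCover_exists_unique_general R hFU V hV
end

section
/- Let the top category of a resolvent pair be finite-dimensional modules over a k-algebra, k algebraically closed. If U(V) is a simple object of the bottom category, then Hom_A(R_V, V) is one-dimensional, spanned by the covering map p_V, where (R_V, p_V) is the relatively projective cover of V. -/
open CategoryTheory CategoryTheory.Limits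

universe v u v' u'

open ModuleCat

variable {k : Type u} [Field k] {Aa : Type u} [Ring Aa] [Algebra k Aa]
  {B : Type u'} [Category.{v'} B] [Abelian B]

/-! Lift `f : R_V ⟶ V` through `p` to an endomorphism `u` of `R_V` and pick an eigenvalue `c`
of `u`; then `u - c` is not surjective. Relative essentiality of `p` says that every
endomorphism `g` for which `U (g ≫ p)` splits is surjective, and since `U V` is simple,
`U (g ≫ p)` splits as soon as `g ≫ p ≠ 0`. Hence `(u - c) ≫ p = 0`, i.e. `f = c • p`. -/

theorem ResolventPair.Allowable.exists_section {A : Type u} [Category.{v} A] [Abelian A]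
    {R : ResolventPair A B} {X Y : A} {f : X ⟶ Y} (hf : R.Allowable f) (hepi : Epi f) :
    ∃ s : R.U.obj Y ⟶ R.U.obj X, s ≫ R.U.map f = 𝟙 _ := by
  have := R.preservesFiniteColimits
  obtain ⟨s, hs⟩ := hf
  exact ⟨s, by rwa [← cancel_epi (R.U.map f), Category.comp_id]⟩

namespace RelEssential

variable {R : ResolventPair (ModuleCat.{u} Aa) B} {M V : ModuleCat.{u} Aa} {p : M ⟶ V}

theorem eq_top_of_section (hess : RelEssential R p) (S : Submodule Aa M)
    (t : R.U.obj V ⟶ R.U.obj (ModuleCat.of Aa S))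
    (ht : t ≫ R.U.map (inclusionHom M S ≫ p) = 𝟙 _) : S = ⊤ := by
  have := R.faithful
  have : IsSplitEpi (R.U.map (inclusionHom M S ≫ p)) := ⟨⟨⟨t, ht⟩⟩⟩
  exact hess S (R.U.epi_of_epi_map inferInstance) ⟨t, by rw [ht, Category.comp_id]⟩

theorem surjective_of_section (hess : RelEssential R p) {N : ModuleCat.{u} Aa} (g : N ⟶ M)
    (w : R.U.obj V ⟶ R.U.obj N) (hw : w ≫ R.U.map (g ≫ p) = 𝟙 _) :
    Function.Surjective g := by
  let g' : N ⟶ ModuleCat.of Aa (LinearMap.range g.hom) := ofHom g.hom.rangeRestrict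
  have hg' : g' ≫ inclusionHom M _ = g := rfl
  refine LinearMap.range_eq_top.mp (hess.eq_top_of_section _ (w ≫ R.U.map g') ?_)
  rw [Category.assoc, ← R.U.map_comp, ← Category.assoc, hg', hw]

theorem eq_zero_of_section_comp_map_eq_zero (hess : RelEssential R p)
    {s : R.U.obj V ⟶ R.U.obj M} (hs : s ≫ R.U.map p = 𝟙 _) {W : ModuleCat.{u} Aa}
    (f : M ⟶ W) (hf : s ≫ R.U.map f = 0) : f = 0 := by
  have := R.preservesFiniteLimits
  obtain ⟨t, ht⟩ : { t : R.U.obj V ⟶ R.U.obj (of Aa (LinearMap.ker f.hom)) //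
      t ≫ R.U.map (inclusionHom M _) = s } :=
    KernelFork.IsLimit.lift' (KernelFork.mapIsLimit _ (kernelIsLimit f) R.U) s hf
  have hker : LinearMap.ker f.hom = ⊤ :=
    hess.eq_top_of_section _ t (by rw [R.U.map_comp, ← Category.assoc, ht, hs])
  exact hom_ext (LinearMap.ker_eq_top.mp hker)

theorem surjective_of_comp_ne_zero [Simple (R.U.obj V)] (hess : RelEssential R p)
    {s : R.U.obj V ⟶ R.U.obj M} (hs : s ≫ R.U.map p = 𝟙 _) {g : M ⟶ M}
    (hg : g ≫ p ≠ 0) : Function.Surjective g := by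
  have hne : s ≫ R.U.map (g ≫ p) ≠ 0 := fun h =>
    hg (hess.eq_zero_of_section_comp_map_eq_zero hs (g ≫ p) h)
  have : IsIso (s ≫ R.U.map (g ≫ p)) := isIso_of_hom_simple hne
  exact hess.surjective_of_section g (inv (s ≫ R.U.map (g ≫ p)) ≫ s) (by simp)

end RelEssential

theorem ModuleCat.exists_not_surjective_sub_smul_id [IsAlgClosed k] {M : ModuleCat.{u} Aa}
    [FiniteDimensional k M] [Nontrivial M] (u : M ⟶ M) :
    ∃ c : k, ¬ Function.Surjective (u - c • 𝟙 M) := by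
  obtain ⟨c, hc⟩ := Module.End.exists_eigenvalue (u.hom.restrictScalars k)
  obtain ⟨x, hx⟩ := hc.exists_hasEigenvector
  refine ⟨c, fun hsurj => hx.2 ?_⟩
  have hinj : Function.Injective ((u - c • 𝟙 M).hom.restrictScalars k) :=
    LinearMap.injective_iff_surjective.mpr hsurj
  have hux : u x = c • x := hx.apply_eq_smul
  refine hinj ?_
  change u x - c • x = (u - c • 𝟙 M) 0
  rw [hux, sub_self, map_zero]

theorem hom_relProjCover_one_dimensional_general [IsAlgClosed k]
    (R : ResolventPair (ModuleCat.{u} Aa) B)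
    (V Rv : ModuleCat.{u} Aa)
    (hRv : FiniteDimensional k Rv)
    (p : Rv ⟶ V) (hcover : IsRelProjCover R p)
    (hsimple : Simple (R.U.obj V)) :
    p ≠ 0 ∧ ∀ f : Rv ⟶ V, ∃ c : k, f = c • p := by
  obtain ⟨hproj, hepi, hallow, hess⟩ := hcover
  obtain ⟨s, hs⟩ := hallow.exists_section hepi
  have := R.additive
  have hp : p ≠ 0 := fun h => id_nonzero (R.U.obj V) (by rw [← hs, h, R.U.map_zero, comp_zero])
  refine ⟨hp, fun f => ?_⟩
  obtain ⟨u, rfl⟩ := hproj p hepi hallow f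
  have : Nontrivial Rv := by
    by_contra htriv
    rw [not_nontrivial_iff_subsingleton] at htriv
    exact hp (by ext x; simp [Subsingleton.elim x 0])
  obtain ⟨c, hc⟩ := ModuleCat.exists_not_surjective_sub_smul_id (k := k) u
  refine ⟨c, sub_eq_zero.mp ?_⟩
  by_contra hne
  have hcomp : (u - c • 𝟙 Rv) ≫ p = u ≫ p - c • p := by
    rw [Preadditive.sub_comp, Linear.smul_comp, Category.id_comp]
  rw [← hcomp] at hne
  exact hc (hess.surjective_of_comp_ne_zero hs hne)

/-- Let the top category of a resolvent pair be the category of finite-dimensional modules over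
a `k`-algebra, `k` algebraically closed.  If `U V` is a simple object of the bottom category
and `(R_V, p_V)` is a relatively projective cover of `V`, then `Hom(R_V, V)` is
one-dimensional, spanned by the covering map `p_V`. -/
theorem hom_relProjCover_one_dimensional [IsAlgClosed k]
    (R : ResolventPair (ModuleCat.{u} Aa) B)
    (V Rv : ModuleCat.{u} Aa) (hV : FiniteDimensional k V)
    (hRv : FiniteDimensional k Rv)
    (hGV : FiniteDimensional k (R.F.obj (R.U.obj V)))
    (p : Rv ⟶ V) (hcover : IsRelProjCover R p)
    (hsimple : Simple (R.U.obj V)) :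
    p ≠ 0 ∧ ∀ f : Rv ⟶ V, ∃ c : k, f = c • p :=
  hom_relProjCover_one_dimensional_general R V Rv hRv p hcover hsimple
end

section
/- Let (A,B) be a resolvent pair in which A, B are tensor categories and the exact faithful functor U : A → B is monoidal. If f : X → X' and g : Y → Y' are allowable morphisms in A, then f ⊗ g : X ⊗ Y → X' ⊗ Y' is allowable. -/
/-!
Allowability of `f` is von Neumann regularity of `U f`. As `U` is strong monoidal,
`U (f ⊗ g) = δ ≫ (U f ⊗ U g) ≫ μ` with `δ`, `μ` isomorphisms; if `s`, `t` are quasi-inverses of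
`U f`, `U g`, then `s ⊗ t` is one of `U f ⊗ U g`, and conjugating by `δ`, `μ` gives one of
`U (f ⊗ g)`.
-/

open CategoryTheory CategoryTheory.Limits

universe v u v' u'

namespace CategoryTheory

open MonoidalCategory

variable {C : Type*} [Category C]

def IsVonNeumannRegular {X Y : C} (φ : X ⟶ Y) : Prop :=
  ∃ s : Y ⟶ X, φ ≫ s ≫ φ = φ

namespace IsVonNeumannRegular

theorem isIso_comp_comp_isIso {X' X Y Y' : C} {φ : X ⟶ Y} (hφ : IsVonNeumannRegular φ)
    (a : X' ⟶ X) (b : Y ⟶ Y') [IsIso a] [IsIso b] : IsVonNeumannRegular (a ≫ φ ≫ b) := by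
  obtain ⟨s, hs⟩ := hφ
  refine ⟨inv b ≫ s ≫ inv a, ?_⟩
  simp only [Category.assoc, IsIso.hom_inv_id_assoc, IsIso.inv_hom_id_assoc, reassoc_of% hs]

theorem tensorHom [MonoidalCategory C] {X X' Y Y' : C} {φ : X ⟶ X'} {ψ : Y ⟶ Y'}
    (hφ : IsVonNeumannRegular φ) (hψ : IsVonNeumannRegular ψ) :
    IsVonNeumannRegular (φ ⊗ₘ ψ) := by
  obtain ⟨s, hs⟩ := hφ
  obtain ⟨t, ht⟩ := hψ
  refine ⟨s ⊗ₘ t, ?_⟩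
  rw [tensorHom_comp_tensorHom, tensorHom_comp_tensorHom, hs, ht]

end IsVonNeumannRegular

end CategoryTheory

theorem ResolventPair.allowable_iff_isVonNeumannRegular {A : Type u} [Category.{v} A] [Abelian A]
    {B : Type u'} [Category.{v'} B] [Abelian B] (R : ResolventPair A B) {V W : A} (f : V ⟶ W) :
    R.Allowable f ↔ IsVonNeumannRegular (R.U.map f) :=
  Iff.rfl

open MonoidalCategory

variable {A : Type u} [Category.{v} A] [Abelian A] {B : Type u'} [Category.{v'} B] [Abelian B]

/-- In a monoidal resolvent pair (the exact faithful right adjoint `U : A ⥤ B` is a monoidal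
functor between tensor categories), the tensor product `f ⊗ g` of allowable morphisms
`f : X ⟶ X'` and `g : Y ⟶ Y'` is allowable. -/
theorem allowable_tensorHom [MonoidalCategory A] [MonoidalCategory B]
    (R : ResolventPair A B) [R.U.Monoidal]
    {X X' Y Y' : A} (f : X ⟶ X') (g : Y ⟶ Y')
    (hf : R.Allowable f) (hg : R.Allowable g) :
    R.Allowable (f ⊗ₘ g) := by
  rw [R.allowable_iff_isVonNeumannRegular, Functor.Monoidal.map_tensor]
  exact (IsVonNeumannRegular.tensorHom hf hg).isIso_comp_comp_isIso _ _
end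

section
/- Let T_q be the Taft algebra at a primitive n-th root of unity q over ℂ, generated by x, g with gx = qxg, x^n = 0, g^n = 1, and the dual Hopf algebra (T_q*)^op generated by the matrix coefficients y, h of the 2-dimensional module X_2^(0). Then the pairing satisfies ⟨y^k h^l, x^i g^j⟩ = q^{lj} (k)_q! δ_{i,k}, where (k)_q! is the q-factorial (k)_q! = (1)_q (2)_q ⋯ (k)_q with (m)_q = (1 - q^m)/(1 - q). -/
/-!
Since `1 ⊗ x` and `x ⊗ g` `q`-commute, the `q`-binomial theorem gives
`Δ(x^a g^c) = ∑_s [a, s]_q x^(a-s) g^c ⊗ x^s g^(a-s+c)`. The functional `h` only sees the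
summand `s = a` and multiplies by `q^c`, so `h^l` acts on `x^a g^c` as `δ_{a,0} q^(l c)`. The
functional `y` only sees the summand `s = a - 1`, contributing the factor `[a, a-1]_q = (a)_q`;
iterating, `y^k` takes the value `δ_{a,k} (k)_q!`.
-/

open scoped TensorProduct

universe u

variable {T : Type u} [Ring T] [HopfAlgebra ℂ T]

/-- Convolution product of two linear functionals on a coalgebra:
`(φ * ψ)(t) = φ(t') ψ(t'')` in Sweedler notation. -/
noncomputable def convMul (φ ψ : Module.Dual ℂ T) : Module.Dual ℂ T :=
  LinearMap.mul' ℂ ℂ ∘ₗ TensorProduct.map φ ψ ∘ₗ Coalgebra.comul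

/-- Convolution powers of a functional (with unit the counit). -/
noncomputable def convPow (φ : Module.Dual ℂ T) : ℕ → Module.Dual ℂ T
  | 0 => Coalgebra.counit
  | m + 1 => convMul φ (convPow φ m)

open Finset

section QBinomial

variable {R : Type*} [CommSemiring R]

/-- Gaussian binomial coefficients `[i, s]_q`. -/
def qBinomial (q : R) : ℕ → ℕ → R
  | 0, 0 => 1
  | 0, _ + 1 => 0
  | i + 1, 0 => qBinomial q i 0
  | i + 1, s + 1 => qBinomial q i s + q ^ (s + 1) * qBinomial q i (s + 1)

theorem qBinomial_zero_right (q : R) (i : ℕ) : qBinomial q i 0 = 1 := by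
  induction i with
  | zero => rfl
  | succ i ih => exact ih

theorem qBinomial_succ_succ (q : R) (i s : ℕ) :
    qBinomial q (i + 1) (s + 1) = qBinomial q i s + q ^ (s + 1) * qBinomial q i (s + 1) :=
  rfl

theorem qBinomial_eq_zero_of_lt (q : R) : ∀ {i s : ℕ}, i < s → qBinomial q i s = 0
  | 0, _ + 1, _ => rfl
  | i + 1, s + 1, h => by
    rw [qBinomial_succ_succ, qBinomial_eq_zero_of_lt q (by omega),
      qBinomial_eq_zero_of_lt q (by omega), mul_zero, add_zero]

theorem qBinomial_self (q : R) (i : ℕ) : qBinomial q i i = 1 := by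
  induction i with
  | zero => rfl
  | succ i ih =>
    rw [qBinomial_succ_succ, ih, qBinomial_eq_zero_of_lt q (by omega), mul_zero, add_zero]

theorem qBinomial_succ_self (q : R) (i : ℕ) :
    qBinomial q (i + 1) i = ∑ t ∈ range (i + 1), q ^ t := by
  induction i with
  | zero => simp [qBinomial_zero_right]
  | succ i ih => rw [qBinomial_succ_succ, ih, qBinomial_self, mul_one, ← sum_range_succ]

end QBinomial

section QCommuting

variable {R A : Type*} [CommSemiring R] [Semiring A] [Algebra R A] {q : R} {a b : A}

theorem mul_pow_of_mul_eq_smul (hba : b * a = q • (a * b)) (s : ℕ) :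
    b * a ^ s = q ^ s • (a ^ s * b) := by
  induction s with
  | zero => simp
  | succ s ih =>
    rw [pow_succ, ← mul_assoc, ih, smul_mul_assoc, mul_assoc, hba, mul_smul_comm, smul_smul,
      ← mul_assoc, ← pow_succ, pow_succ q]

theorem add_pow_of_mul_eq_smul (hba : b * a = q • (a * b)) (i : ℕ) :
    (a + b) ^ i = ∑ s ∈ range (i + 1), qBinomial q i s • (a ^ s * b ^ (i - s)) := by
  induction i with
  | zero => simp [qBinomial]
  | succ i ih =>
    have hb : ∀ s ∈ range (i + 1),
        b * (qBinomial q i s • (a ^ s * b ^ (i - s))) =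
          (q ^ s * qBinomial q i s) • (a ^ s * b ^ (i + 1 - s)) := fun s hs => by
      rw [mul_smul_comm, ← mul_assoc, mul_pow_of_mul_eq_smul hba, smul_mul_assoc, smul_smul,
        mul_assoc, ← pow_succ', mul_comm (q ^ s), Nat.sub_add_comm (mem_range_succ_iff.mp hs)]
    calc (a + b) ^ (i + 1)
        = ∑ s ∈ range (i + 1), qBinomial q i s • (a ^ (s + 1) * b ^ (i - s)) +
            ∑ s ∈ range (i + 1), (q ^ s * qBinomial q i s) • (a ^ s * b ^ (i + 1 - s)) := by
          rw [pow_succ', ih, add_mul, mul_sum, mul_sum, sum_congr rfl hb]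
          simp only [mul_smul_comm, ← mul_assoc, ← pow_succ']
      _ = ∑ s ∈ range (i + 2), qBinomial q (i + 1) s • (a ^ s * b ^ (i + 1 - s)) := by
          rw [sum_range_succ' _ (i + 1), sum_range_succ' (fun s => (q ^ s * _) • _)]
          simp only [qBinomial_succ_succ, add_smul, sum_add_distrib, Nat.add_sub_add_right]
          rw [sum_range_succ (fun s => (q ^ (s + 1) * _) • _) i,
            qBinomial_eq_zero_of_lt q (Nat.lt_succ_self i)]
          simp only [qBinomial_zero_right, mul_zero, zero_smul, add_zero, one_smul, pow_zero,
            one_mul]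
          abel

end QCommuting

section Bialgebra

variable {R A : Type*} [CommSemiring R] [Semiring A] [Bialgebra R A] {q : R} {x g : A}

theorem comul_pow_mul_pow (hgx : g * x = q • (x * g))
    (hcx : Coalgebra.comul (R := R) x = 1 ⊗ₜ[R] x + x ⊗ₜ[R] g)
    (hcg : Coalgebra.comul (R := R) g = g ⊗ₜ[R] g) (a c : ℕ) :
    Coalgebra.comul (R := R) (x ^ a * g ^ c) =
      ∑ s ∈ range (a + 1),
        qBinomial q a s • ((x ^ (a - s) * g ^ c) ⊗ₜ[R] (x ^ s * g ^ (a - s + c))) := by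
  have hq : (x ⊗ₜ[R] g) * ((1 : A) ⊗ₜ[R] x) = q • (((1 : A) ⊗ₜ[R] x) * (x ⊗ₜ[R] g)) := by
    simp only [Algebra.TensorProduct.tmul_mul_tmul, mul_one, one_mul, hgx,
      TensorProduct.tmul_smul]
  calc Coalgebra.comul (R := R) (x ^ a * g ^ c)
      = ((1 : A) ⊗ₜ[R] x + x ⊗ₜ[R] g) ^ a * (g ⊗ₜ[R] g) ^ c := by
        rw [← Bialgebra.comulAlgHom_apply, map_mul, map_pow, map_pow,
          Bialgebra.comulAlgHom_apply, Bialgebra.comulAlgHom_apply, hcx, hcg]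
    _ = _ := by
        simp only [add_pow_of_mul_eq_smul hq, sum_mul, smul_mul_assoc,
          Algebra.TensorProduct.tmul_pow, one_pow, Algebra.TensorProduct.tmul_mul_tmul, one_mul,
          mul_assoc, ← pow_add]

theorem counit_pow_mul_pow (hex : Coalgebra.counit (R := R) x = 0)
    (heg : Coalgebra.counit (R := R) g = 1) (a c : ℕ) :
    Coalgebra.counit (R := R) (x ^ a * g ^ c) = if a = 0 then 1 else 0 := by
  rw [← Bialgebra.counitAlgHom_apply, map_mul, map_pow, map_pow, Bialgebra.counitAlgHom_apply,
    Bialgebra.counitAlgHom_apply, hex, heg, one_pow, mul_one, zero_pow_eq]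

end Bialgebra

noncomputable def qFactorial {K : Type*} [Field K] (q : K) (k : ℕ) : K :=
  ∏ m ∈ range k, (1 - q ^ (m + 1)) / (1 - q)

theorem qFactorial_succ {K : Type*} [Field K] {q : K} (hq : q ≠ 1) (k : ℕ) :
    qFactorial q (k + 1) = qBinomial q (k + 1) k * qFactorial q k := by
  rw [qFactorial, prod_range_succ, qBinomial_succ_self, geom_sum_eq hq, mul_comm, qFactorial,
    ← neg_sub (1 : K), ← neg_sub (1 : K) q, neg_div_neg_eq]

section Taft

variable {q : ℂ} {x g : T}

theorem convMul_apply_pow_mul_pow (hgx : g * x = q • (x * g))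
    (hcx : Coalgebra.comul (R := ℂ) x = 1 ⊗ₜ[ℂ] x + x ⊗ₜ[ℂ] g)
    (hcg : Coalgebra.comul (R := ℂ) g = g ⊗ₜ[ℂ] g) (φ ψ : Module.Dual ℂ T) (a c : ℕ) :
    convMul φ ψ (x ^ a * g ^ c) =
      ∑ s ∈ range (a + 1),
        qBinomial q a s * (φ (x ^ (a - s) * g ^ c) * ψ (x ^ s * g ^ (a - s + c))) := by
  simp only [convMul, LinearMap.coe_comp, Function.comp_apply,
    comul_pow_mul_pow hgx hcx hcg, map_sum, map_smul, TensorProduct.map_tmul,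
    LinearMap.mul'_apply, smul_eq_mul]

theorem convMul_apply_of_apply_eq_ite_zero (hgx : g * x = q • (x * g))
    (hcx : Coalgebra.comul (R := ℂ) x = 1 ⊗ₜ[ℂ] x + x ⊗ₜ[ℂ] g)
    (hcg : Coalgebra.comul (R := ℂ) g = g ⊗ₜ[ℂ] g) {φ : Module.Dual ℂ T} (χ : ℕ → ℂ)
    (hφ : ∀ a c, φ (x ^ a * g ^ c) = if a = 0 then χ c else 0) (ψ : Module.Dual ℂ T)
    (a c : ℕ) : convMul φ ψ (x ^ a * g ^ c) = χ c * ψ (x ^ a * g ^ c) := by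
  rw [convMul_apply_pow_mul_pow hgx hcx hcg, sum_eq_single_of_mem a (self_mem_range_succ a)]
  · rw [Nat.sub_self, hφ, if_pos rfl, qBinomial_self, one_mul, zero_add]
  · intro s hs hsa
    rw [hφ, if_neg (by simp only [mem_range] at hs; omega), zero_mul, mul_zero]

theorem convPow_apply_pow_mul_pow_eq_ite_pow (hgx : g * x = q • (x * g))
    (hcx : Coalgebra.comul (R := ℂ) x = 1 ⊗ₜ[ℂ] x + x ⊗ₜ[ℂ] g)
    (hcg : Coalgebra.comul (R := ℂ) g = g ⊗ₜ[ℂ] g)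
    (hex : Coalgebra.counit (R := ℂ) x = 0) (heg : Coalgebra.counit (R := ℂ) g = 1)
    {h : Module.Dual ℂ T} (hh : ∀ a c, h (x ^ a * g ^ c) = if a = 0 then q ^ c else 0)
    (l a c : ℕ) : convPow h l (x ^ a * g ^ c) = if a = 0 then q ^ (l * c) else 0 := by
  induction l with
  | zero => simp [convPow, counit_pow_mul_pow hex heg]
  | succ l ih =>
    rw [convPow, convMul_apply_of_apply_eq_ite_zero hgx hcx hcg _ hh, ih]
    split_ifs <;> ring

theorem convPow_apply_pow_mul_pow_eq_ite_qFactorial (hq : q ≠ 1) (hgx : g * x = q • (x * g))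
    (hcx : Coalgebra.comul (R := ℂ) x = 1 ⊗ₜ[ℂ] x + x ⊗ₜ[ℂ] g)
    (hcg : Coalgebra.comul (R := ℂ) g = g ⊗ₜ[ℂ] g)
    (hex : Coalgebra.counit (R := ℂ) x = 0) (heg : Coalgebra.counit (R := ℂ) g = 1)
    {y : Module.Dual ℂ T} (hy : ∀ a c, y (x ^ a * g ^ c) = if a = 1 then 1 else 0)
    (k a c : ℕ) : convPow y k (x ^ a * g ^ c) = if a = k then qFactorial q k else 0 := by
  induction k generalizing a c with
  | zero => simp [convPow, counit_pow_mul_pow hex heg, qFactorial]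
  | succ k ih =>
    rw [convPow, convMul_apply_pow_mul_pow hgx hcx hcg]
    -- only the summand in which `y` sees exactly one `x` survives
    rcases a with _ | a
    · rw [sum_range_one, hy, if_neg (by omega), zero_mul, mul_zero, if_neg k.succ_ne_zero.symm]
    · rw [sum_eq_single_of_mem a (by simp)]
      · rw [Nat.add_sub_cancel_left, hy, if_pos rfl, one_mul, ih, qFactorial_succ hq]
        split_ifs <;> simp_all
      · intro s hs hsa
        rw [hy, if_neg (by simp only [mem_range] at hs; omega), zero_mul, mul_zero]

end Taft

theorem taft_pairing_general
    {n : ℕ} (hn : 2 ≤ n) {q : ℂ} (hq : IsPrimitiveRoot q n)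
    (x g : T)
    (hgx : g * x = q • (x * g)) (hxn : x ^ n = 0) (hgn : g ^ n = 1)
    (hcx : Coalgebra.comul (R := ℂ) x = 1 ⊗ₜ[ℂ] x + x ⊗ₜ[ℂ] g)
    (hcg : Coalgebra.comul (R := ℂ) g = g ⊗ₜ[ℂ] g)
    (hex : Coalgebra.counit (R := ℂ) x = 0) (heg : Coalgebra.counit (R := ℂ) g = 1)
    (y h : Module.Dual ℂ T)
    (hy : ∀ i j : ℕ, i < n → j < n → y (x ^ i * g ^ j) = if i = 1 then 1 else 0)
    (hh : ∀ i j : ℕ, i < n → j < n → h (x ^ i * g ^ j) = if i = 0 then q ^ j else 0)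
    (K l i j : ℕ) :
    convMul (convPow h l) (convPow y K) (x ^ i * g ^ j) =
      q ^ (l * j) * (∏ m ∈ Finset.range K, ((1 - q ^ (m + 1)) / (1 - q))) *
        (if i = K then 1 else 0) := by
  have hn0 : 0 < n := by omega
  have hy' : ∀ a c, y (x ^ a * g ^ c) = if a = 1 then 1 else 0 := by
    intro a c
    rcases lt_or_ge a n with ha | ha
    · rw [pow_eq_pow_mod c hgn, hy a _ ha (Nat.mod_lt c hn0)]
    · rw [pow_eq_zero_of_le ha hxn, zero_mul, map_zero, if_neg (by omega)]
  have hh' : ∀ a c, h (x ^ a * g ^ c) = if a = 0 then q ^ c else 0 := by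
    intro a c
    rcases lt_or_ge a n with ha | ha
    · rw [pow_eq_pow_mod c hgn, hh a _ ha (Nat.mod_lt c hn0), ← pow_eq_pow_mod c hq.pow_eq_one]
    · rw [pow_eq_zero_of_le ha hxn, zero_mul, map_zero, if_neg (by omega)]
  rw [convMul_apply_of_apply_eq_ite_zero hgx hcx hcg _
      (convPow_apply_pow_mul_pow_eq_ite_pow hgx hcx hcg hex heg hh' l),
    convPow_apply_pow_mul_pow_eq_ite_qFactorial (hq.ne_one hn) hgx hcx hcg hex heg hy']
  split_ifs <;> simp [qFactorial]

/-- Let `T_q` be the Taft algebra at a primitive `n`-th root of unity `q`: the Hopf algebra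
generated by `x, g` with `g x = q x g`, `x^n = 0`, `g^n = 1`, `Δx = 1 ⊗ x + x ⊗ g`,
`Δg = g ⊗ g`, and let `y, h ∈ T_q*` be the matrix coefficients of the two-dimensional module
`X₂⁽⁰⁾` (so `y(x^i g^j) = δ_{i,1}` and `h(x^i g^j) = δ_{i,0} q^j`).  Then the pairing of the
monomial `y^k h^l` of `(T_q*)^op` (whose product is the opposite convolution product) with the
monomial `x^i g^j` of `T_q` is `⟨y^k h^l, x^i g^j⟩ = q^{l j} (k)_q! δ_{i,k}`, where
`(k)_q! = (1)_q (2)_q ⋯ (k)_q` with `(m)_q = (1 - q^m)/(1 - q)`. -/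
theorem taft_pairing
    {n : ℕ} (hn : 2 ≤ n) {q : ℂ} (hq : IsPrimitiveRoot q n)
    (x g : T)
    (hgx : g * x = q • (x * g)) (hxn : x ^ n = 0) (hgn : g ^ n = 1)
    (hcx : Coalgebra.comul (R := ℂ) x = 1 ⊗ₜ[ℂ] x + x ⊗ₜ[ℂ] g)
    (hcg : Coalgebra.comul (R := ℂ) g = g ⊗ₜ[ℂ] g)
    (hex : Coalgebra.counit (R := ℂ) x = 0) (heg : Coalgebra.counit (R := ℂ) g = 1)
    (hSx : HopfAlgebra.antipode (R := ℂ) x = -(x * g ^ (n - 1)))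
    (hSg : HopfAlgebra.antipode (R := ℂ) g = g ^ (n - 1))
    (b : Module.Basis (Fin n × Fin n) ℂ T)
    (hb : ∀ p : Fin n × Fin n, b p = x ^ (p.1 : ℕ) * g ^ (p.2 : ℕ))
    (y h : Module.Dual ℂ T)
    (hy : ∀ i j : ℕ, i < n → j < n → y (x ^ i * g ^ j) = if i = 1 then 1 else 0)
    (hh : ∀ i j : ℕ, i < n → j < n → h (x ^ i * g ^ j) = if i = 0 then q ^ j else 0)
    (K l i j : ℕ) (hK : K < n) (hl : l < n) (hi : i < n) (hj : j < n) :
    convMul (convPow h l) (convPow y K) (x ^ i * g ^ j) =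
      q ^ (l * j) * (∏ m ∈ Finset.range K, ((1 - q ^ (m + 1)) / (1 - q))) *
        (if i = K then 1 else 0) :=
  taft_pairing_general hn hq x g hgx hxn hgn hcx hcg hex heg y h hy hh K l i j
end
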